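/- Let ρ be a d×d complex density matrix with diagonal entries ρ_ii, and let σ = diag(x_1,...,x_d) be an incoherent state (x_i ≥ 0, Σx_i = 1). Then the sub-fidelity satisfies E(ρ,σ) = Σ_{i=1}^d ρ_ii x_i + √2·[Σ_{i,j=1}^d (ρ_ii ρ_jj - |ρ_ij|²) x_i x_j]^{1/2}, and consequently sup over incoherent states σ of E(ρ,σ) ≥ max_{1≤i≤d} ρ_ii. -/

import Mathlib

open scoped ComplexOrder

open Matrix Classical in
/-- The positive semidefinite square root of a matrix (junk value `0` if not PSD). -/
noncomputable def msqrt {d : ℕ} (A : Matrix (Fin d) (Fin d) ℂ) : Matrix (Fin d) (Fin d) ℂ :=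
  if h : A.PosSemidef then
    (h.1.eigenvectorUnitary : Matrix (Fin d) (Fin d) ℂ) *
      diagonal (fun i => ((Real.sqrt (h.1.eigenvalues i) : ℝ) : ℂ)) *
      (star h.1.eigenvectorUnitary : Matrix (Fin d) (Fin d) ℂ)
  else 0

/-- A density matrix: positive semidefinite with trace 1. -/
def IsDensity {d : ℕ} (ρ : Matrix (Fin d) (Fin d) ℂ) : Prop :=
  ρ.PosSemidef ∧ ρ.trace = 1

/-- An incoherent state: a diagonal density matrix. -/
def IsIncoherent {d : ℕ} (σ : Matrix (Fin d) (Fin d) ℂ) : Prop :=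
  IsDensity σ ∧ σ.IsDiag

/-- The fidelity `F(ρ,σ) = (Tr √(√σ ρ √σ))²`. -/
noncomputable def fid {d : ℕ} (ρ σ : Matrix (Fin d) (Fin d) ℂ) : ℝ :=
  ((msqrt (msqrt σ * ρ * msqrt σ)).trace.re) ^ 2

/-- The geometric measure of coherence `C_g(ρ) = 1 - sup {F(ρ,σ) : σ incoherent}`. -/
noncomputable def Cg {d : ℕ} (ρ : Matrix (Fin d) (Fin d) ℂ) : ℝ :=
  1 - sSup {x : ℝ | ∃ σ : Matrix (Fin d) (Fin d) ℂ, IsIncoherent σ ∧ x = fid ρ σ}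

/-- The sub-fidelity `E(ρ,σ) = Tr(ρσ) + √(2[(Tr ρσ)² - Tr(ρσρσ)])`. -/
noncomputable def subFid {d : ℕ} (ρ σ : Matrix (Fin d) (Fin d) ℂ) : ℝ :=
  ((ρ * σ).trace).re +
    Real.sqrt (2 * ((((ρ * σ).trace).re) ^ 2 - ((ρ * σ * ρ * σ).trace).re))

lemma tr_quartic {d : ℕ} (ρ : Matrix (Fin d) (Fin d) ℂ) (t : Fin d → ℝ) :
    (ρ * Matrix.diagonal (fun i => ((t i : ℝ) : ℂ)) * ρ * Matrix.diagonal (fun i => ((t i : ℝ) : ℂ))).trace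
      = ∑ i, ∑ j, ρ i j * ρ j i * (t i : ℂ) * (t j : ℂ) := by
  simp only [Matrix.trace, Matrix.diag, Matrix.mul_apply, Matrix.diagonal_apply,
    mul_ite, mul_zero, ite_mul, zero_mul, Finset.sum_ite_eq', Finset.sum_ite_eq,
    Finset.mem_univ, if_true]
  refine Finset.sum_congr rfl fun i _ => ?_
  rw [Finset.sum_mul]
  exact Finset.sum_congr rfl fun j _ => by ring

lemma diag_nonneg' {d : ℕ} {M : Matrix (Fin d) (Fin d) ℂ} (hM : M.PosSemidef) (i : Fin d) :
    0 ≤ M i i := by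
  exact hM.diag_nonneg

lemma subFid_diag' {d : ℕ} (ρ : Matrix (Fin d) (Fin d) ℂ) (hρ : ρ.IsHermitian) (t : Fin d → ℝ) :
    (((ρ * Matrix.diagonal fun i => ((t i : ℝ) : ℂ)).trace).re = ∑ i, (ρ i i).re * t i) ∧
    (((ρ * Matrix.diagonal (fun i => ((t i : ℝ) : ℂ)) * ρ * Matrix.diagonal (fun i => ((t i : ℝ) : ℂ))).trace).re
      = ∑ i, ∑ j, ‖ρ i j‖^2 * (t i * t j)) := by
  constructor
  · have h1 : (ρ * Matrix.diagonal fun i => ((t i : ℝ) : ℂ)).trace = ∑ i, ρ i i * (t i : ℂ) := by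
      simp [Matrix.trace, Matrix.diag, Matrix.mul_diagonal]
    rw [h1, Complex.re_sum]
    exact Finset.sum_congr rfl fun i _ => by simp [Complex.mul_re]
  · rw [tr_quartic, Complex.re_sum]
    refine Finset.sum_congr rfl fun i _ => ?_
    rw [Complex.re_sum]
    refine Finset.sum_congr rfl fun j _ => ?_
    have hji : ρ j i = (starRingEnd ℂ) (ρ i j) := by
      have := congrFun (congrFun hρ j) i
      simpa [Matrix.conjTranspose_apply] using this.symm
    rw [hji, Complex.mul_conj, ← Complex.ofReal_mul, ← Complex.ofReal_mul,
      Complex.ofReal_re, Complex.sq_norm]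
    ring

lemma incoherent_repr {d : ℕ} {τ : Matrix (Fin d) (Fin d) ℂ} (h : IsIncoherent τ) :
    ∃ t : Fin d → ℝ, (∀ i, 0 ≤ t i) ∧ (∑ i, t i = 1) ∧
      τ = Matrix.diagonal fun i => ((t i : ℝ) : ℂ) := by
  refine ⟨fun i => (τ i i).re, fun i => (Complex.nonneg_iff.mp (diag_nonneg' h.1.1 i)).1, ?_, ?_⟩
  · have := congrArg Complex.re h.1.2
    simpa [Matrix.trace, Matrix.diag, Complex.re_sum] using this
  · ext i j
    by_cases hij : i = j
    · subst hij
      rw [Matrix.diagonal_apply_eq]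
      have him := (Complex.nonneg_iff.mp (diag_nonneg' h.1.1 i)).2
      exact Complex.ext (by simp) (by simp [← him])
    · rw [Matrix.diagonal_apply_ne _ hij]
      exact h.2 hij

/-- The key evaluation of the sub-fidelity against a diagonal state. -/
lemma subFid_diag_val {d : ℕ} (ρ : Matrix (Fin d) (Fin d) ℂ) (hρ : ρ.IsHermitian)
    (t : Fin d → ℝ) :
    subFid ρ (Matrix.diagonal fun i => ((t i : ℝ) : ℂ)) =
      (∑ i, (ρ i i).re * t i) +
        Real.sqrt (2 * ((∑ i, (ρ i i).re * t i) ^ 2 -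
          ∑ i, ∑ j, ‖ρ i j‖^2 * (t i * t j))) := by
  obtain ⟨h1, h2⟩ := subFid_diag' ρ hρ t
  unfold subFid
  rw [h1, h2]

/-- Formula for the sub-fidelity with an incoherent state, and the resulting lower bound
on the supremum of the sub-fidelity over incoherent states. -/
theorem subFid_incoherent {d : ℕ}
    (ρ : Matrix (Fin d) (Fin d) ℂ) (hρ : IsDensity ρ)
    (x : Fin d → ℝ) (hx0 : ∀ i, 0 ≤ x i) (hx1 : ∑ i, x i = 1)
    (σ : Matrix (Fin d) (Fin d) ℂ) (hσ : σ = Matrix.diagonal fun i => ((x i : ℝ) : ℂ)) :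
    subFid ρ σ = ∑ i, (ρ i i).re * x i +
        Real.sqrt 2 * Real.sqrt (∑ i, ∑ j,
          ((ρ i i).re * (ρ j j).re - ‖ρ i j‖ ^ 2) * (x i * x j)) ∧
      (⨆ i : Fin d, (ρ i i).re) ≤
        sSup {y : ℝ | ∃ τ : Matrix (Fin d) (Fin d) ℂ, IsIncoherent τ ∧ y = subFid ρ τ} := by
  have hherm : ρ.IsHermitian := hρ.1.1
  set a : Fin d → ℝ := fun i => (ρ i i).re with ha
  have ha0 : ∀ i, 0 ≤ a i := fun i => (Complex.nonneg_iff.mp (diag_nonneg' hρ.1 i)).1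
  have hatr : ∑ i, a i = 1 := by
    have := congrArg Complex.re hρ.2
    simpa [Matrix.trace, Matrix.diag, Complex.re_sum] using this
  have ha1 : ∀ i, a i ≤ 1 := fun i =>
    hatr ▸ Finset.single_le_sum (fun j _ => ha0 j) (Finset.mem_univ i)
  -- the key algebraic identity
  have hsq : ∀ t : Fin d → ℝ,
      (∑ i, a i * t i) ^ 2 - ∑ i, ∑ j, ‖ρ i j‖^2 * (t i * t j)
        = ∑ i, ∑ j, (a i * a j - ‖ρ i j‖ ^ 2) * (t i * t j) := by
    intro t
    rw [sq, Finset.sum_mul_sum, ← Finset.sum_sub_distrib]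
    refine Finset.sum_congr rfl fun i _ => ?_
    rw [← Finset.sum_sub_distrib]
    exact Finset.sum_congr rfl fun j _ => by ring
  constructor
  · subst hσ
    rw [subFid_diag_val ρ hherm x, hsq x, Real.sqrt_mul (by norm_num : (0:ℝ) ≤ 2)]
  · -- d ≠ 0
    have hd : 0 < d := by
      rcases Nat.eq_zero_or_pos d with h | h
      · exfalso
        subst h
        have := hρ.2
        simp [Matrix.trace] at this
      · exact h
    haveI : Nonempty (Fin d) := Fin.pos_iff_nonempty.mp hd
    -- the set is bounded above
    have hbdd : BddAbove {y : ℝ | ∃ τ : Matrix (Fin d) (Fin d) ℂ,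
        IsIncoherent τ ∧ y = subFid ρ τ} := by
      refine ⟨1 + Real.sqrt 2, ?_⟩
      rintro y ⟨τ, hτ, rfl⟩
      obtain ⟨t, ht0, ht1, rfl⟩ := incoherent_repr hτ
      rw [subFid_diag_val ρ hherm t]
      set A := ∑ i, a i * t i with hA
      have hA0 : 0 ≤ A := Finset.sum_nonneg fun i _ => mul_nonneg (ha0 i) (ht0 i)
      have hA1 : A ≤ 1 := by
        calc A ≤ ∑ i, t i := Finset.sum_le_sum fun i _ => by
                nlinarith [ha0 i, ha1 i, ht0 i]
          _ = 1 := ht1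
      have hB0 : 0 ≤ ∑ i, ∑ j, ‖ρ i j‖^2 * (t i * t j) :=
        Finset.sum_nonneg fun i _ => Finset.sum_nonneg fun j _ =>
          mul_nonneg (sq_nonneg _) (mul_nonneg (ht0 i) (ht0 j))
      have h1 : Real.sqrt (2 * (A ^ 2 - ∑ i, ∑ j, ‖ρ i j‖^2 * (t i * t j)))
          ≤ Real.sqrt (2 * A ^ 2) := Real.sqrt_le_sqrt (by nlinarith)
      have h2 : Real.sqrt (2 * A ^ 2) ≤ Real.sqrt 2 := by
        rw [Real.sqrt_mul (by norm_num : (0:ℝ) ≤ 2), Real.sqrt_sq hA0]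
        nlinarith [Real.sqrt_nonneg 2]
      exact add_le_add hA1 (h1.trans h2)
    -- a maximizing index
    obtain ⟨i₀, hi₀⟩ := Finite.exists_max a
    have hsup : (⨆ i : Fin d, a i) ≤ a i₀ := ciSup_le hi₀
    -- the witness state
    set t0 : Fin d → ℝ := fun j => if j = i₀ then 1 else 0 with ht0def
    have hτ₀ : IsIncoherent (Matrix.diagonal fun i => ((t0 i : ℝ) : ℂ)) := by
      refine ⟨⟨Matrix.posSemidef_diagonal_iff.mpr fun i => ?_, ?_⟩, Matrix.isDiag_diagonal _⟩
      · rw [Complex.nonneg_iff]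
        constructor
        · simp only [Complex.ofReal_re, ht0def]
          split_ifs <;> norm_num
        · simp
      · rw [Matrix.trace_diagonal]
        rw [← Complex.ofReal_sum]
        norm_cast
        simp [ht0def, Finset.sum_ite_eq']
    have hmem : subFid ρ (Matrix.diagonal fun i => ((t0 i : ℝ) : ℂ)) ∈
        {y : ℝ | ∃ τ : Matrix (Fin d) (Fin d) ℂ, IsIncoherent τ ∧ y = subFid ρ τ} :=
      ⟨_, hτ₀, rfl⟩
    have hval : a i₀ ≤ subFid ρ (Matrix.diagonal fun i => ((t0 i : ℝ) : ℂ)) := by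
      rw [subFid_diag_val ρ hherm t0]
      have hsum : ∑ i, a i * t0 i = a i₀ := by
        simp [ht0def, mul_ite, Finset.sum_ite_eq']
      rw [hsum]
      have := Real.sqrt_nonneg (2 * ((a i₀) ^ 2 -
        ∑ i, ∑ j, ‖ρ i j‖^2 * (t0 i * t0 j)))
      linarith
    exact hsup.trans (hval.trans (le_csSup hbdd hmem))
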